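/- Let X : Ω → ℝⁿ and ε : Ω → ℝⁿ be square-integrable random vectors on a probability space, with X and ε independent and E[ε] = 0. Let Γ_X = E[X Xᵀ], set Y = X + ε with Γ_Y = E[Y Yᵀ] = Γ_X + Γ_ε, and suppose L_Y has full column rank with Γ_Y = L_Y L_Yᵀ. Let M be a best rank-≤r approximation of Γ_X (L_Y†)ᵀ in the Frobenius norm, and set Â = M L_Y†. Then rank(Â) ≤ r and for every A ∈ ℝ^{n×n} with rank(A) ≤ r, E‖Â (X + ε) − X‖₂² ≤ E‖A (X + ε) − X‖₂². -/

import Mathlib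

/-!
Independence and `E[ε] = 0` make the cross moment `E[X Yᵀ]` equal to `Γ_X`, so the risk of `A` is
`tr(A Γ_Y Aᵀ) - 2 tr(A Γ_X) + tr Γ_X`. The projection `Q = 1 - L_Y L_Y†` kills `L_Y`, hence
`E[(QY)(QY)ᵀ] = Q Γ_Y Qᵀ = 0`, so `QY = 0` almost surely and `Q Γ_X = 0`. With this, completing the
square gives `risk(A) = ‖Γ_X (L_Y†)ᵀ - A L_Y‖_F² + const`. Full column rank gives `L_Y† L_Y = 1`,
so `Â L_Y = M`, while `A L_Y` has rank at most `r` whenever `A` does; the optimality of `M` among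
such matrices is therefore the optimality of `Â`.
-/

open Matrix MeasureTheory

/-- Second (cross-)moment matrix `E[X Yᵀ]` of two random vectors. -/
noncomputable def secondMoment {Ω : Type} [MeasurableSpace Ω] (μ : Measure Ω)
    {n m : ℕ} (X : Ω → Fin n → ℝ) (Y : Ω → Fin m → ℝ) : Matrix (Fin n) (Fin m) ℝ :=
  Matrix.of fun i j => ∫ ω, X ω i * Y ω j ∂μ

/-- Frobenius norm of a real matrix. -/
noncomputable def frob {m n : ℕ} (A : Matrix (Fin m) (Fin n) ℝ) : ℝ :=
  Real.sqrt (∑ i, ∑ j, (A i j) ^ 2)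

/-- `Ad` is the Moore–Penrose pseudoinverse of `A` (the four Penrose conditions). -/
def IsMoorePenrose {m n : ℕ} (A : Matrix (Fin m) (Fin n) ℝ)
    (Ad : Matrix (Fin n) (Fin m) ℝ) : Prop :=
  A * Ad * A = A ∧ Ad * A * Ad = Ad ∧ (A * Ad)ᵀ = A * Ad ∧ (Ad * A)ᵀ = Ad * A

open ProbabilityTheory

section SecondMoment

variable {Ω : Type} [MeasurableSpace Ω] {μ : Measure Ω} {n m k : ℕ}

lemma secondMoment_transpose (X : Ω → Fin n → ℝ) (Y : Ω → Fin m → ℝ) :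
    (secondMoment μ X Y)ᵀ = secondMoment μ Y X := by
  ext i j
  simp only [secondMoment, transpose_apply, of_apply, mul_comm]

lemma integrable_apply_mul_apply {X : Ω → Fin n → ℝ} {Y : Ω → Fin m → ℝ}
    (hX : MemLp X 2 μ) (hY : MemLp Y 2 μ) (i : Fin n) (j : Fin m) :
    Integrable (fun ω => X ω i * Y ω j) μ :=
  (hX.eval i).integrable_mul (hY.eval j)

lemma memLp_mulVec {X : Ω → Fin n → ℝ} (A : Matrix (Fin k) (Fin n) ℝ) (hX : MemLp X 2 μ) :
    MemLp (fun ω => A *ᵥ X ω) 2 μ :=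
  (LinearMap.toContinuousLinearMap A.mulVecLin).comp_memLp' hX

lemma secondMoment_mulVec_left {X : Ω → Fin n → ℝ} {Y : Ω → Fin m → ℝ}
    (A : Matrix (Fin k) (Fin n) ℝ) (hX : MemLp X 2 μ) (hY : MemLp Y 2 μ) :
    secondMoment μ (fun ω => A *ᵥ X ω) Y = A * secondMoment μ X Y := by
  ext i j
  simp only [secondMoment, of_apply, mul_apply, mulVec, dotProduct, Finset.sum_mul, mul_assoc]
  rw [integral_finsetSum _ fun a _ => (integrable_apply_mul_apply hX hY a j).const_mul _]
  simp only [integral_const_mul]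

lemma secondMoment_mulVec_right {X : Ω → Fin n → ℝ} {Y : Ω → Fin m → ℝ}
    (A : Matrix (Fin k) (Fin m) ℝ) (hX : MemLp X 2 μ) (hY : MemLp Y 2 μ) :
    secondMoment μ X (fun ω => A *ᵥ Y ω) = secondMoment μ X Y * Aᵀ := by
  rw [← secondMoment_transpose, secondMoment_mulVec_left A hY hX, transpose_mul,
    secondMoment_transpose]

lemma secondMoment_add_left {X X' : Ω → Fin n → ℝ} {Y : Ω → Fin m → ℝ}
    (hX : MemLp X 2 μ) (hX' : MemLp X' 2 μ) (hY : MemLp Y 2 μ) :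
    secondMoment μ (fun ω => X ω + X' ω) Y = secondMoment μ X Y + secondMoment μ X' Y := by
  ext i j
  simp only [secondMoment, of_apply, Matrix.add_apply, Pi.add_apply, add_mul]
  exact integral_add (integrable_apply_mul_apply hX hY i j) (integrable_apply_mul_apply hX' hY i j)

lemma secondMoment_add_right {X : Ω → Fin n → ℝ} {Y Y' : Ω → Fin m → ℝ}
    (hX : MemLp X 2 μ) (hY : MemLp Y 2 μ) (hY' : MemLp Y' 2 μ) :
    secondMoment μ X (fun ω => Y ω + Y' ω) = secondMoment μ X Y + secondMoment μ X Y' := by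
  rw [← secondMoment_transpose, secondMoment_add_left hY hY' hX, transpose_add,
    secondMoment_transpose, secondMoment_transpose]

lemma secondMoment_sub_left {X X' : Ω → Fin n → ℝ} {Y : Ω → Fin m → ℝ}
    (hX : MemLp X 2 μ) (hX' : MemLp X' 2 μ) (hY : MemLp Y 2 μ) :
    secondMoment μ (fun ω => X ω - X' ω) Y = secondMoment μ X Y - secondMoment μ X' Y := by
  ext i j
  simp only [secondMoment, of_apply, Matrix.sub_apply, Pi.sub_apply, sub_mul]
  exact integral_sub (integrable_apply_mul_apply hX hY i j) (integrable_apply_mul_apply hX' hY i j)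

lemma secondMoment_sub_right {X : Ω → Fin n → ℝ} {Y Y' : Ω → Fin m → ℝ}
    (hX : MemLp X 2 μ) (hY : MemLp Y 2 μ) (hY' : MemLp Y' 2 μ) :
    secondMoment μ X (fun ω => Y ω - Y' ω) = secondMoment μ X Y - secondMoment μ X Y' := by
  rw [← secondMoment_transpose, secondMoment_sub_left hY hY' hX, transpose_sub,
    secondMoment_transpose, secondMoment_transpose]

lemma trace_secondMoment_self {W : Ω → Fin n → ℝ} (hW : MemLp W 2 μ) :
    trace (secondMoment μ W W) = ∫ ω, ∑ i, W ω i ^ 2 ∂μ := by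
  rw [integral_finsetSum _ fun i _ => (hW.eval i).integrable_sq]
  simp only [trace, diag, secondMoment, of_apply, sq]

lemma ae_eq_zero_of_trace_secondMoment_self_eq_zero {W : Ω → Fin n → ℝ} (hW : MemLp W 2 μ)
    (h : trace (secondMoment μ W W) = 0) : W =ᵐ[μ] 0 := by
  have hint : Integrable (fun ω => ∑ i, W ω i ^ 2) μ :=
    integrable_finsetSum _ fun i _ => (hW.eval i).integrable_sq
  rw [trace_secondMoment_self hW,
    integral_eq_zero_iff_of_nonneg (fun ω => by positivity) hint] at h
  filter_upwards [h] with ω hω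
  funext i
  simpa using (Finset.sum_eq_zero_iff_of_nonneg fun i _ => sq_nonneg (W ω i)).mp hω i
    (Finset.mem_univ i)

lemma secondMoment_mul_transpose_eq_zero {X : Ω → Fin n → ℝ} {Y : Ω → Fin m → ℝ}
    (hX : MemLp X 2 μ) (hY : MemLp Y 2 μ) (Q : Matrix (Fin k) (Fin m) ℝ)
    (h : Q * secondMoment μ Y Y * Qᵀ = 0) : secondMoment μ X Y * Qᵀ = 0 := by
  have hQY : (fun ω => Q *ᵥ Y ω) =ᵐ[μ] 0 := by
    refine ae_eq_zero_of_trace_secondMoment_self_eq_zero (memLp_mulVec Q hY) ?_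
    rw [secondMoment_mulVec_left Q hY (memLp_mulVec Q hY), secondMoment_mulVec_right Q hY hY,
      ← Matrix.mul_assoc, h, trace_zero]
  rw [← secondMoment_mulVec_right Q hX hY]
  ext i j
  refine integral_eq_zero_of_ae ?_
  filter_upwards [hQY] with ω hω
  simp [hω]

lemma secondMoment_eq_zero_of_indepFun {ε : Ω → Fin n → ℝ} {X : Ω → Fin m → ℝ}
    (hε : Integrable ε μ) (hX : AEStronglyMeasurable X μ) (hindep : IndepFun ε X μ)
    (hmean : ∫ ω, ε ω ∂μ = 0) : secondMoment μ ε X = 0 := by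
  ext i j
  have hmean_i : ∫ ω, ε ω i ∂μ = 0 := by
    rw [← eval_integral hε.eval, hmean, Pi.zero_apply]
  have hindep_ij : IndepFun (fun ω => ε ω i) (fun ω => X ω j) μ :=
    hindep.comp (measurable_pi_apply i) (measurable_pi_apply j)
  simp only [secondMoment, of_apply, Matrix.zero_apply]
  rw [hindep_ij.integral_fun_mul_eq_mul_integral (hε.eval i).aestronglyMeasurable
    ((continuous_apply j).comp_aestronglyMeasurable hX), hmean_i, zero_mul]

end SecondMoment

lemma frob_sq {m n : ℕ} (A : Matrix (Fin m) (Fin n) ℝ) : frob A ^ 2 = trace (A * Aᵀ) := by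
  rw [frob, Real.sq_sqrt (by positivity)]
  simp [trace, mul_apply, sq]

namespace IsMoorePenrose

variable {n p : ℕ} {L : Matrix (Fin n) (Fin p) ℝ} {Ld : Matrix (Fin p) (Fin n) ℝ}

lemma mul_eq_one_of_rank_eq (h : IsMoorePenrose L Ld) (hrank : L.rank = p) : Ld * L = 1 := by
  have hker : L * (Ld * L - 1) = 0 := by
    rw [Matrix.mul_sub, ← Matrix.mul_assoc, h.1, Matrix.mul_one, sub_self]
  have hzero : (Ld * L - 1).rank = 0 := by
    have := rank_add_rank_le_card_of_mul_eq_zero hker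
    simp only [Fintype.card_fin, hrank] at this
    omega
  rw [rank, Submodule.finrank_eq_zero, LinearMap.range_eq_bot] at hzero
  rw [← sub_eq_zero, ← toLin'.map_eq_zero_iff]
  exact hzero

end IsMoorePenrose

lemma trace_sub_two_mul_trace_eq_frob_sq_sub {n m p : ℕ} (A : Matrix (Fin n) (Fin m) ℝ)
    {L : Matrix (Fin m) (Fin p) ℝ} {Ld : Matrix (Fin p) (Fin m) ℝ} {C : Matrix (Fin n) (Fin m) ℝ}
    (hC : L * Ld * Cᵀ = Cᵀ) :
    trace (A * (L * Lᵀ) * Aᵀ) - 2 * trace (A * Cᵀ)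
      = frob (C * Ldᵀ - A * L) ^ 2 - frob (C * Ldᵀ) ^ 2 := by
  have hcross : A * L * (C * Ldᵀ)ᵀ = A * Cᵀ := by
    rw [transpose_mul, transpose_transpose, Matrix.mul_assoc, ← Matrix.mul_assoc L, hC]
  have hcross' : trace (C * Ldᵀ * (A * L)ᵀ) = trace (A * Cᵀ) := by
    rw [← trace_transpose, transpose_mul, transpose_transpose, hcross]
  have hquad : A * L * (A * L)ᵀ = A * (L * Lᵀ) * Aᵀ := by
    simp only [transpose_mul, Matrix.mul_assoc]
  simp only [frob_sq, transpose_sub, Matrix.sub_mul, Matrix.mul_sub, trace_sub, hcross, hcross',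
    hquad]
  ring

section Risk

variable {Ω : Type} [MeasurableSpace Ω] {μ : Measure Ω} {n m p : ℕ}

lemma IsMoorePenrose.mul_mul_secondMoment_eq {L : Matrix (Fin m) (Fin p) ℝ}
    {Ld : Matrix (Fin p) (Fin m) ℝ} (hLd : IsMoorePenrose L Ld) {X : Ω → Fin n → ℝ}
    {Y : Ω → Fin m → ℝ} (hX : MemLp X 2 μ) (hY : MemLp Y 2 μ)
    (hL : secondMoment μ Y Y = L * Lᵀ) : L * Ld * secondMoment μ Y X = secondMoment μ Y X := by
  set Q := 1 - L * Ld
  have hQt : Qᵀ = Q := by rw [transpose_sub, transpose_one, hLd.2.2.1]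
  have hQL : Q * L = 0 := by rw [Matrix.sub_mul, Matrix.one_mul, hLd.1, sub_self]
  have hXYQ : secondMoment μ X Y * Qᵀ = 0 :=
    secondMoment_mul_transpose_eq_zero hX hY Q
      (by rw [hL, ← Matrix.mul_assoc, hQL, Matrix.zero_mul, Matrix.zero_mul])
  have hQYX : Q * secondMoment μ Y X = 0 := by
    simpa [transpose_mul, hQt, secondMoment_transpose] using congrArg transpose hXYQ
  rw [Matrix.sub_mul, Matrix.one_mul, sub_eq_zero] at hQYX
  exact hQYX.symm

lemma integral_sum_sq_mulVec_sub {X : Ω → Fin n → ℝ} {Y : Ω → Fin m → ℝ}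
    (hX : MemLp X 2 μ) (hY : MemLp Y 2 μ) (A : Matrix (Fin n) (Fin m) ℝ) :
    ∫ ω, ∑ i, (A *ᵥ Y ω - X ω) i ^ 2 ∂μ
      = trace (A * secondMoment μ Y Y * Aᵀ) - 2 * trace (A * secondMoment μ Y X)
        + trace (secondMoment μ X X) := by
  have hAY := memLp_mulVec A hY
  have hE : MemLp (fun ω => A *ᵥ Y ω - X ω) 2 μ := hAY.sub hX
  have hcross : trace (secondMoment μ X Y * Aᵀ) = trace (A * secondMoment μ Y X) := by
    rw [← trace_transpose, transpose_mul, transpose_transpose, secondMoment_transpose]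
  rw [← trace_secondMoment_self hE, secondMoment_sub_left hAY hX hE,
    secondMoment_sub_right hAY hAY hX, secondMoment_sub_right hX hAY hX,
    secondMoment_mulVec_left A hY hAY, secondMoment_mulVec_right A hY hY,
    secondMoment_mulVec_left A hY hX, secondMoment_mulVec_right A hX hY, ← Matrix.mul_assoc]
  simp only [trace_sub, hcross]
  ring

lemma integral_sum_sq_mulVec_sub_eq_frob_sq {X : Ω → Fin n → ℝ} {Y : Ω → Fin m → ℝ}
    (hX : MemLp X 2 μ) (hY : MemLp Y 2 μ) {L : Matrix (Fin m) (Fin p) ℝ}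
    {Ld : Matrix (Fin p) (Fin m) ℝ} (hL : secondMoment μ Y Y = L * Lᵀ)
    (hLd : IsMoorePenrose L Ld) (A : Matrix (Fin n) (Fin m) ℝ) :
    ∫ ω, ∑ i, (A *ᵥ Y ω - X ω) i ^ 2 ∂μ
      = frob (secondMoment μ X Y * Ldᵀ - A * L) ^ 2 - frob (secondMoment μ X Y * Ldᵀ) ^ 2
        + trace (secondMoment μ X X) := by
  have hrange := hLd.mul_mul_secondMoment_eq hX hY hL
  rw [← secondMoment_transpose] at hrange
  rw [integral_sum_sq_mulVec_sub hX hY, hL, ← secondMoment_transpose X Y,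
    trace_sub_two_mul_trace_eq_frob_sq_sub A hrange]

end Risk

theorem denoising_end_to_end_optimal_general {Ω : Type} [MeasurableSpace Ω]
    (μ : Measure Ω) [IsProbabilityMeasure μ] {n p r : ℕ}
    (X : Ω → Fin n → ℝ) (ε : Ω → Fin n → ℝ)
    (hX : MemLp X 2 μ) (hε : MemLp ε 2 μ)
    (hindep : ProbabilityTheory.IndepFun X ε μ)
    (hmean : (∫ ω, ε ω ∂μ) = 0)
    (LY : Matrix (Fin n) (Fin p) ℝ) (hLYrank : LY.rank = p)
    (hLY : secondMoment μ (fun ω => X ω + ε ω) (fun ω => X ω + ε ω) = LY * LYᵀ)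
    (LYd : Matrix (Fin p) (Fin n) ℝ) (hLYd : IsMoorePenrose LY LYd)
    (M : Matrix (Fin n) (Fin p) ℝ)
    (hMrank : M.rank ≤ r)
    (hMbest : ∀ N : Matrix (Fin n) (Fin p) ℝ, N.rank ≤ r →
      frob (secondMoment μ X X * LYdᵀ - M) ≤ frob (secondMoment μ X X * LYdᵀ - N)) :
    (M * LYd).rank ≤ r ∧
      ∀ A : Matrix (Fin n) (Fin n) ℝ, A.rank ≤ r →
        ∫ ω, ∑ i, ((M * LYd) *ᵥ (X ω + ε ω) - X ω) i ^ 2 ∂μ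
          ≤ ∫ ω, ∑ i, (A *ᵥ (X ω + ε ω) - X ω) i ^ 2 ∂μ := by
  have hXY : secondMoment μ X (fun ω => X ω + ε ω) = secondMoment μ X X := by
    rw [secondMoment_add_right hX hX hε, ← secondMoment_transpose ε X,
      secondMoment_eq_zero_of_indepFun (hε.integrable one_le_two) hX.aestronglyMeasurable
        hindep.symm hmean, transpose_zero, add_zero]
  have hrisk :=
    integral_sum_sq_mulVec_sub_eq_frob_sq (Y := fun ω => X ω + ε ω) hX (hX.add hε) hLY hLYd
  rw [hXY] at hrisk
  refine ⟨(rank_mul_le_left M LYd).trans hMrank, fun A hA => ?_⟩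
  rw [hrisk, hrisk, Matrix.mul_assoc, hLYd.mul_eq_one_of_rank_eq hLYrank, Matrix.mul_one]
  gcongr ?_ - _ + _
  exact pow_le_pow_left₀ (Real.sqrt_nonneg _) (hMbest _ ((rank_mul_le_left A LY).trans hA)) 2

/-- Rank-constrained data denoising: `Â = (Γ_X (L_Y†)ᵀ)_r L_Y†` minimizes the
denoising Bayes risk `E‖A (X + ε) − X‖₂²` over all `A` with `rank(A) ≤ r`. -/
theorem denoising_end_to_end_optimal {Ω : Type} [MeasurableSpace Ω]
    (μ : Measure Ω) [IsProbabilityMeasure μ] {n p r : ℕ}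
    (X : Ω → Fin n → ℝ) (ε : Ω → Fin n → ℝ)
    (hX : MemLp X 2 μ) (hε : MemLp ε 2 μ)
    (hindep : ProbabilityTheory.IndepFun X ε μ)
    (hmean : (∫ ω, ε ω ∂μ) = 0)
    (LY : Matrix (Fin n) (Fin p) ℝ) (hLYrank : LY.rank = p)
    (hLY : secondMoment μ (fun ω => X ω + ε ω) (fun ω => X ω + ε ω) = LY * LYᵀ)
    (hLYsum : secondMoment μ (fun ω => X ω + ε ω) (fun ω => X ω + ε ω)
        = secondMoment μ X X + secondMoment μ ε ε)
    (LYd : Matrix (Fin p) (Fin n) ℝ) (hLYd : IsMoorePenrose LY LYd)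
    (M : Matrix (Fin n) (Fin p) ℝ)
    (hMrank : M.rank ≤ r)
    (hMbest : ∀ N : Matrix (Fin n) (Fin p) ℝ, N.rank ≤ r →
      frob (secondMoment μ X X * LYdᵀ - M) ≤ frob (secondMoment μ X X * LYdᵀ - N)) :
    (M * LYd).rank ≤ r ∧
      ∀ A : Matrix (Fin n) (Fin n) ℝ, A.rank ≤ r →
        ∫ ω, ∑ i, ((M * LYd) *ᵥ (X ω + ε ω) - X ω) i ^ 2 ∂μ
          ≤ ∫ ω, ∑ i, (A *ᵥ (X ω + ε ω) - X ω) i ^ 2 ∂μ :=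
  denoising_end_to_end_optimal_general μ X ε hX hε hindep hmean LY hLYrank hLY LYd hLYd M hMrank
    hMbest
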